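/- Let C, λ, M, c be positive reals and u a real with |u| ≤ c*M. Then |artanh(C*u / (c*(2λ + C*M)))| ≤ (1/2) * log(1 + C*M/λ). Consequently, for two values u, u' each bounded in absolute value by c*M, |artanh(C*u/(c*(2λ+C*M))) - artanh(C*u'/(c*(2λ+C*M)))| ≤ log(1 + C*M/λ). -/

import Mathlib

/-- The inverse hyperbolic tangent, defined as the inverse of `Real.tanh`. -/
noncomputable def artanh : ℝ → ℝ := Function.invFun Real.tanh

open Set

theorem artanh_eq_real_artanh {x : ℝ} (hx : x ∈ Ioo (-1) 1) : artanh x = Real.artanh x := by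
  conv_lhs => rw [← Real.tanh_artanh hx]
  exact Function.leftInverse_invFun Real.tanh_injective _

theorem Real.artanh_neg_eq_neg (x : ℝ) : Real.artanh (-x) = -Real.artanh x := by
  rw [Real.artanh, Real.artanh, sub_neg_eq_add, ← sub_eq_add_neg, ← inv_div, Real.sqrt_inv,
    Real.log_inv]

theorem Real.abs_artanh_le_artanh {x a : ℝ} (ha : a < 1) (hx : |x| ≤ a) :
    |Real.artanh x| ≤ Real.artanh a := by
  obtain ⟨hax, hxa⟩ := abs_le.mp hx
  rw [abs_le, ← Real.artanh_neg_eq_neg]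
  exact ⟨Real.artanh_le_artanh (by linarith) (by linarith) hax,
    Real.artanh_le_artanh (by linarith) ha hxa⟩

theorem abs_artanh_le_real_artanh {x a : ℝ} (ha : a < 1) (hx : |x| ≤ a) :
    |artanh x| ≤ Real.artanh a := by
  have hx₁ : x ∈ Ioo (-1) 1 := abs_lt.mp (hx.trans_lt ha)
  rw [artanh_eq_real_artanh hx₁]
  exact Real.abs_artanh_le_artanh ha hx

theorem Real.artanh_div_two_mul_add {p q : ℝ} (hp : 0 ≤ p) (hq : 0 < q) :
    Real.artanh (p / (2 * q + p)) = 1 / 2 * Real.log (1 + p / q) := by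
  have hd : 0 < 2 * q + p := by positivity
  have hmem : p / (2 * q + p) ∈ Icc (-1) 1 :=
    ⟨by linarith [div_nonneg hp hd.le], (div_le_one hd).mpr (by linarith)⟩
  rw [Real.artanh_eq_half_log hmem]
  congr 2
  field_simp
  ring

theorem artanh_sensitivity_abs_bound
    (C lam M c : ℝ) (hC : 0 < C) (hlam : 0 < lam) (hM : 0 < M) (hc : 0 < c) :
    (∀ u : ℝ, |u| ≤ c * M →
      |artanh (C * u / (c * (2 * lam + C * M)))| ≤ (1 / 2) * Real.log (1 + C * M / lam)) ∧
    (∀ u u' : ℝ, |u| ≤ c * M → |u'| ≤ c * M →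
      |artanh (C * u / (c * (2 * lam + C * M))) - artanh (C * u' / (c * (2 * lam + C * M)))|
        ≤ Real.log (1 + C * M / lam)) := by
  have hD : 0 < 2 * lam + C * M := by positivity
  have hlt : C * M / (2 * lam + C * M) < 1 := (div_lt_one hD).mpr (by linarith)
  have hscale : ∀ u : ℝ, |u| ≤ c * M →
      |C * u / (c * (2 * lam + C * M))| ≤ C * M / (2 * lam + C * M) := by
    intro u hu
    rw [abs_div, abs_mul, abs_mul, abs_of_pos hC, abs_of_pos hc, abs_of_pos hD,
      div_le_div_iff₀ (by positivity) hD]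
    calc C * |u| * (2 * lam + C * M) ≤ C * (c * M) * (2 * lam + C * M) := by gcongr
      _ = C * M * (c * (2 * lam + C * M)) := by ring
  have hbound : ∀ u : ℝ, |u| ≤ c * M →
      |artanh (C * u / (c * (2 * lam + C * M)))| ≤ (1 / 2) * Real.log (1 + C * M / lam) := by
    intro u hu
    rw [← Real.artanh_div_two_mul_add (by positivity) hlam]
    exact abs_artanh_le_real_artanh hlt (hscale u hu)
  refine ⟨hbound, fun u u' hu hu' => ?_⟩
  linarith [abs_sub _ _ |>.trans (add_le_add (hbound u hu) (hbound u' hu'))]
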